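/- arXiv:2301.13177 — 7 statements merged into one kernel-verified Lean document; each statement's English description precedes it below -/
import Mathlib

section
/- For a non-increasing null sequence of positive reals (x_n), the quantity sup{α ≥ 0 : Σ_n x_n^{1/α} < ∞} equals sup{α ≥ 0 : lim_{n→∞} x_n · n^α = 0}. -/
/-!
If `∑ x_n^{1/a}` converges and `x` is non-increasing, then `n x_n^{1/a}` is bounded by the sum,
so `x_n = O(n^{-a})` and `x_n n^b → 0` for every `b < a`. Conversely, if `x_n n^b → 0` then
eventually `x_n^{1/a} ≤ n^{-b/a}`, which is summable for `0 < a < b`. So below every element of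
either set of exponents lies an open interval `(0, a)` contained in the other set, and two such
sets of nonnegative reals have the same supremum, also when they are unbounded and `sSup` takes
the junk value `0`.
-/

open Filter Topology Set

namespace Real

lemma bddAbove_of_forall_Ioo_subset {A B : Set ℝ} (hB : BddAbove B)
    (hAB : ∀ a ∈ A, Ioo 0 a ⊆ B) : BddAbove A := by
  obtain ⟨M, hM⟩ := hB
  refine ⟨max M 0, fun a ha => le_of_not_gt fun hlt => ?_⟩
  obtain ⟨c, hMc, hca⟩ := exists_between hlt
  have hcB : c ∈ B := hAB a ha ⟨(le_max_right M 0).trans_lt hMc, hca⟩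
  exact (hM hcB).not_gt ((le_max_left M 0).trans_lt hMc)

lemma sSup_le_sSup_of_forall_Ioo_subset {A B : Set ℝ} (hB : BddAbove B)
    (hB0 : ∀ b ∈ B, 0 ≤ b) (hAB : ∀ a ∈ A, Ioo 0 a ⊆ B) : sSup A ≤ sSup B := by
  have hsup0 : 0 ≤ sSup B := sSup_nonneg hB0
  refine Real.sSup_le (fun a ha => le_of_forall_lt fun c hca => ?_) hsup0
  rcases lt_or_ge c 0 with hc | hc
  · exact hc.trans_le hsup0
  · obtain ⟨c', hcc', hc'a⟩ := exists_between hca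
    exact hcc'.trans_le (le_csSup hB (hAB a ha ⟨hc.trans_lt hcc', hc'a⟩))

lemma sSup_eq_sSup_of_forall_Ioo_subset {A B : Set ℝ} (hA0 : ∀ a ∈ A, 0 ≤ a)
    (hB0 : ∀ b ∈ B, 0 ≤ b) (hAB : ∀ a ∈ A, Ioo 0 a ⊆ B) (hBA : ∀ b ∈ B, Ioo 0 b ⊆ A) :
    sSup A = sSup B := by
  by_cases hB : BddAbove B
  · exact le_antisymm (sSup_le_sSup_of_forall_Ioo_subset hB hB0 hAB)
      (sSup_le_sSup_of_forall_Ioo_subset (bddAbove_of_forall_Ioo_subset hB hAB) hA0 hBA)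
  · have hA : ¬BddAbove A := fun hA => hB (bddAbove_of_forall_Ioo_subset hA hBA)
    rw [sSup_of_not_bddAbove hA, sSup_of_not_bddAbove hB]

end Real

lemma Antitone.succ_mul_le_tsum {f : ℕ → ℝ} (hf : Antitone f) (hf0 : ∀ n, 0 ≤ f n)
    (hs : Summable f) (n : ℕ) : ((n : ℝ) + 1) * f n ≤ ∑' k, f k :=
  calc ((n : ℝ) + 1) * f n = (Finset.range (n + 1)).card • f n := by simp [nsmul_eq_mul]
    _ ≤ ∑ k ∈ Finset.range (n + 1), f k :=
      Finset.card_nsmul_le_sum _ _ _ fun k hk => hf (Nat.lt_succ_iff.mp (Finset.mem_range.mp hk))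
    _ ≤ ∑' k, f k := hs.sum_le_tsum _ fun k _ => hf0 k

lemma tendsto_natCast_add_one_rpow_atTop_zero {p : ℝ} (hp : p < 0) :
    Tendsto (fun n : ℕ => ((n : ℝ) + 1) ^ p) atTop (𝓝 0) := by
  have h := (tendsto_rpow_neg_atTop (neg_pos.mpr hp)).comp
    (tendsto_atTop_add_const_right _ 1 tendsto_natCast_atTop_atTop)
  simpa only [Function.comp_def, neg_neg] using h

lemma tendsto_mul_rpow_of_summable_rpow {y : ℕ → ℝ} (hy0 : ∀ n, 0 ≤ y n) (hy : Antitone y)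
    {a b : ℝ} (hs : Summable fun n => y n ^ (1 / a)) (ha : 0 < a) (hba : b < a) :
    Tendsto (fun n : ℕ => y n * ((n : ℝ) + 1) ^ b) atTop (𝓝 0) := by
  set S := ∑' n, y n ^ (1 / a)
  have hroot0 (n : ℕ) : 0 ≤ y n ^ (1 / a) := Real.rpow_nonneg (hy0 n) _
  have hS0 : 0 ≤ S := tsum_nonneg hroot0
  have hanti : Antitone fun n => y n ^ (1 / a) := fun m n hmn =>
    Real.rpow_le_rpow (hy0 n) (hy hmn) (by positivity)
  have hbound (n : ℕ) : y n * ((n : ℝ) + 1) ^ b ≤ S ^ a * ((n : ℝ) + 1) ^ (b - a) := by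
    have hn : (0 : ℝ) < n + 1 := by positivity
    have hroot : y n ^ (1 / a) ≤ S / (n + 1) := by
      rw [le_div_iff₀ hn, mul_comm]
      exact hanti.succ_mul_le_tsum hroot0 hs n
    have hy_le : y n ≤ S ^ a / ((n : ℝ) + 1) ^ a :=
      calc y n = (y n ^ (1 / a)) ^ a := by
            rw [← Real.rpow_mul (hy0 n), one_div_mul_cancel ha.ne', Real.rpow_one]
        _ ≤ (S / (n + 1)) ^ a := Real.rpow_le_rpow (hroot0 n) hroot ha.le
        _ = S ^ a / ((n : ℝ) + 1) ^ a := Real.div_rpow hS0 hn.le a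
    calc y n * ((n : ℝ) + 1) ^ b ≤ S ^ a / ((n : ℝ) + 1) ^ a * ((n : ℝ) + 1) ^ b := by gcongr
      _ = S ^ a * ((n : ℝ) + 1) ^ (b - a) := by rw [Real.rpow_sub hn]; ring
  refine squeeze_zero (fun n => mul_nonneg (hy0 n) (by positivity)) hbound ?_
  simpa using (tendsto_natCast_add_one_rpow_atTop_zero (sub_neg.mpr hba)).const_mul (S ^ a)

lemma summable_rpow_of_tendsto_mul_rpow {y : ℕ → ℝ} (hy0 : ∀ n, 0 ≤ y n) {a b : ℝ}
    (hb : Tendsto (fun n : ℕ => y n * ((n : ℝ) + 1) ^ b) atTop (𝓝 0)) (ha : 0 < a)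
    (hab : a < b) : Summable fun n => y n ^ (1 / a) := by
  have hg : Summable fun n : ℕ => ((n : ℝ) + 1) ^ (-(b / a)) := by
    have hs : Summable fun n : ℕ => (n : ℝ) ^ (-(b / a)) := by
      rw [Real.summable_nat_rpow, neg_lt_neg_iff]
      exact (one_lt_div ha).mpr hab
    simpa using (summable_nat_add_iff 1).mpr hs
  refine hg.of_norm_bounded_eventually_nat ?_
  filter_upwards [hb.eventually (ge_mem_nhds one_pos)] with n hn
  have hn0 : (0 : ℝ) < n + 1 := by positivity
  have hy_le : y n ≤ ((n : ℝ) + 1) ^ (-b) := by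
    rwa [Real.rpow_neg hn0.le, ← one_div, le_div_iff₀ (by positivity)]
  rw [Real.norm_of_nonneg (Real.rpow_nonneg (hy0 n) _)]
  calc y n ^ (1 / a) ≤ (((n : ℝ) + 1) ^ (-b)) ^ (1 / a) :=
        Real.rpow_le_rpow (hy0 n) hy_le (by positivity)
    _ = ((n : ℝ) + 1) ^ (-(b / a)) := by rw [← Real.rpow_mul hn0.le]; ring_nf

theorem stmt0_general (x : ℕ → ℝ) (hpos : ∀ n, 1 ≤ n → 0 < x n)
    (hmono : ∀ m n, 1 ≤ m → m ≤ n → x n ≤ x m) :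
    sSup {a : ℝ | 0 ≤ a ∧ Summable (fun n : ℕ => x (n + 1) ^ (1 / a))} =
      sSup {a : ℝ | 0 ≤ a ∧
        Tendsto (fun n : ℕ => x (n + 1) * ((n : ℝ) + 1) ^ a) atTop (nhds 0)} := by
  have hx0 (n : ℕ) : 0 ≤ x (n + 1) := (hpos (n + 1) (Nat.le_add_left 1 n)).le
  have hx : Antitone fun n => x (n + 1) := fun m n hmn => hmono _ _ (by omega) (by omega)
  refine Real.sSup_eq_sSup_of_forall_Ioo_subset (fun a ha => ha.1) (fun b hb => hb.1) ?_ ?_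
  · rintro a ⟨-, hs⟩ b ⟨hb0, hba⟩
    exact ⟨hb0.le, tendsto_mul_rpow_of_summable_rpow hx0 hx hs (hb0.trans hba) hba⟩
  · rintro b ⟨-, hb⟩ a ⟨ha0, hab⟩
    exact ⟨ha0.le, summable_rpow_of_tendsto_mul_rpow hx0 hb ha0 hab⟩

/-- For a non-increasing null sequence of positive reals `x` (indexed from 1),
`sup{α ≥ 0 : Σ_{n≥1} x_n^{1/α} < ∞} = sup{α ≥ 0 : x_n n^α → 0}`. -/
theorem stmt0 (x : ℕ → ℝ) (hpos : ∀ n, 1 ≤ n → 0 < x n)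
    (hmono : ∀ m n, 1 ≤ m → m ≤ n → x n ≤ x m)
    (hlim : Tendsto x atTop (nhds 0)) :
    sSup {a : ℝ | 0 ≤ a ∧ Summable (fun n : ℕ => x (n + 1) ^ (1 / a))} =
      sSup {a : ℝ | 0 ≤ a ∧
        Tendsto (fun n : ℕ => x (n + 1) * ((n : ℝ) + 1) ^ a) atTop (nhds 0)} :=
  stmt0_general x hpos hmono
end

section
/- For a non-increasing null sequence of positive reals (x_n), the quantity sup{α ≥ 0 : Σ_n x_n^{1/α} < ∞} equals sup{α ≥ 0 : sup_n x_n · n^α < ∞}. -/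
open Filter

lemma lemA (x : ℕ → ℝ) (hpos : ∀ n, 1 ≤ n → 0 < x n)
    (hmono : ∀ m n, 1 ≤ m → m ≤ n → x n ≤ x m)
    {a : ℝ} (ha : 0 < a) (hs : Summable (fun n : ℕ => x (n + 1) ^ (1 / a))) :
    ∃ C : ℝ, ∀ n : ℕ, x (n + 1) * ((n : ℝ) + 1) ^ a ≤ C := by
  set y : ℕ → ℝ := fun n => x (n + 1) ^ (1 / a) with hy
  have hypos : ∀ n, 0 < y n := fun n =>
    Real.rpow_pos_of_pos (hpos (n + 1) (Nat.le_add_left 1 n)) _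
  set S : ℝ := ∑' n, y n with hS
  refine ⟨S ^ a, fun n => ?_⟩
  have hyn : ∀ k, k ≤ n → y n ≤ y k := by
    intro k hk
    exact Real.rpow_le_rpow (hpos (n + 1) (Nat.le_add_left 1 n)).le
      (hmono (k + 1) (n + 1) (Nat.le_add_left 1 k) (by omega))
      (one_div_pos.mpr ha).le
  have h1 : ((n : ℝ) + 1) * y n ≤ S := by
    have h2 : (Finset.range (n + 1)).card • y n ≤ ∑ k ∈ Finset.range (n + 1), y k :=
      Finset.card_nsmul_le_sum _ _ _ (fun k hk => hyn k (by simpa using Nat.lt_succ_iff.mp (Finset.mem_range.mp hk)))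
    have h3 : ∑ k ∈ Finset.range (n + 1), y k ≤ S :=
      Summable.sum_le_tsum _ (fun k _ => (hypos k).le) hs
    calc ((n : ℝ) + 1) * y n = (Finset.range (n + 1)).card • y n := by
          simp [nsmul_eq_mul]
      _ ≤ ∑ k ∈ Finset.range (n + 1), y k := h2
      _ ≤ S := h3
  have hn1 : (0 : ℝ) < (n : ℝ) + 1 := by positivity
  have h4 : y n ≤ S / ((n : ℝ) + 1) := by
    rw [le_div_iff₀ hn1]; linarith [h1]
  have h5 : x (n + 1) = (y n) ^ a := by
    show x (n + 1) = (x (n + 1) ^ (1 / a)) ^ a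
    rw [← Real.rpow_mul (hpos (n + 1) (Nat.le_add_left 1 n)).le,
      one_div_mul_cancel ha.ne', Real.rpow_one]
  have h6 : x (n + 1) ≤ (S / ((n : ℝ) + 1)) ^ a := by
    rw [h5]
    exact Real.rpow_le_rpow (hypos n).le h4 ha.le
  have hSnn : 0 ≤ S := tsum_nonneg (fun k => (hypos k).le)
  calc x (n + 1) * ((n : ℝ) + 1) ^ a
      ≤ (S / ((n : ℝ) + 1)) ^ a * ((n : ℝ) + 1) ^ a :=
        mul_le_mul_of_nonneg_right h6 (Real.rpow_nonneg hn1.le _)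
    _ = (S / ((n : ℝ) + 1) * ((n : ℝ) + 1)) ^ a := by
        rw [← Real.mul_rpow (by positivity) hn1.le]
    _ = S ^ a := by rw [div_mul_cancel₀ _ hn1.ne']

lemma lemB (x : ℕ → ℝ) (hpos : ∀ n, 1 ≤ n → 0 < x n)
    {a b C : ℝ} (ha : 0 < a) (hab : a < b)
    (hC : ∀ n : ℕ, x (n + 1) * ((n : ℝ) + 1) ^ b ≤ C) :
    Summable (fun n : ℕ => x (n + 1) ^ (1 / a)) := by
  have hC0 : 0 < C := by
    have := hC 0
    simp only [Nat.cast_zero, zero_add, Real.one_rpow, mul_one] at this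
    exact lt_of_lt_of_le (hpos 1 le_rfl) this
  have hq : 1 < b / a := (one_lt_div ha).mpr hab
  -- target summable majorant
  have hsum : Summable (fun n : ℕ => C ^ (1 / a) * ((n : ℝ) + 1) ^ (-(b / a))) := by
    have h0 : Summable (fun n : ℕ => (n : ℝ) ^ (-(b / a))) :=
      Real.summable_nat_rpow.mpr (by linarith)
    have h1 : Summable (fun n : ℕ => ((n + 1 : ℕ) : ℝ) ^ (-(b / a))) :=
      (summable_nat_add_iff 1).mpr h0
    have h2 : Summable (fun n : ℕ => ((n : ℝ) + 1) ^ (-(b / a))) := by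
      convert h1 using 2 with n
      push_cast
      ring_nf
    exact h2.mul_left _
  refine Summable.of_nonneg_of_le (fun n => Real.rpow_nonneg (hpos (n + 1) (Nat.le_add_left 1 n)).le _) (fun n => ?_) hsum
  have hn1 : (0 : ℝ) < (n : ℝ) + 1 := by positivity
  have hx : x (n + 1) ≤ C * ((n : ℝ) + 1) ^ (-b) := by
    have := hC n
    rw [Real.rpow_neg hn1.le, ← div_eq_mul_inv, le_div_iff₀ (Real.rpow_pos_of_pos hn1 b)]
    exact this
  calc x (n + 1) ^ (1 / a)
      ≤ (C * ((n : ℝ) + 1) ^ (-b)) ^ (1 / a) :=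
        Real.rpow_le_rpow (hpos (n + 1) (Nat.le_add_left 1 n)).le hx (by positivity)
    _ = C ^ (1 / a) * ((n : ℝ) + 1) ^ (-(b / a)) := by
        rw [Real.mul_rpow hC0.le (Real.rpow_nonneg hn1.le _),
          ← Real.rpow_mul hn1.le]
        ring_nf

/-- For a non-increasing null sequence of positive reals `x` (indexed from 1),
`sup{α ≥ 0 : Σ_{n≥1} x_n^{1/α} < ∞} = sup{α ≥ 0 : sup_n x_n n^α < ∞}`. -/
theorem stmt1 (x : ℕ → ℝ) (hpos : ∀ n, 1 ≤ n → 0 < x n)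
    (hmono : ∀ m n, 1 ≤ m → m ≤ n → x n ≤ x m)
    (hlim : Tendsto x atTop (nhds 0)) :
    sSup {a : ℝ | 0 ≤ a ∧ Summable (fun n : ℕ => x (n + 1) ^ (1 / a))} =
      sSup {a : ℝ | 0 ≤ a ∧
        ∃ C : ℝ, ∀ n : ℕ, x (n + 1) * ((n : ℝ) + 1) ^ a ≤ C} := by
  set A : Set ℝ := {a : ℝ | 0 ≤ a ∧ Summable (fun n : ℕ => x (n + 1) ^ (1 / a))} with hA
  set B : Set ℝ := {a : ℝ | 0 ≤ a ∧
    ∃ C : ℝ, ∀ n : ℕ, x (n + 1) * ((n : ℝ) + 1) ^ a ≤ C} with hB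
  have h0B : (0 : ℝ) ∈ B := by
    refine ⟨le_rfl, x 1, fun n => ?_⟩
    rw [Real.rpow_zero, mul_one]
    exact hmono 1 (n + 1) le_rfl (Nat.le_add_left 1 n)
  have hAB : A ⊆ B := by
    rintro a ⟨ha0, hs⟩
    rcases eq_or_lt_of_le ha0 with h | h
    · exact h ▸ h0B
    · exact ⟨ha0, lemA x hpos hmono h hs⟩
  have hBA : ∀ b ∈ B, ∀ a : ℝ, 0 < a → a < b → a ∈ A := by
    rintro b ⟨hb0, C, hC⟩ a ha hab
    exact ⟨ha.le, lemB x hpos ha hab hC⟩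
  by_cases hbdd : BddAbove B
  · have hAbdd : BddAbove A := hbdd.mono hAB
    apply le_antisymm
    · rcases Set.eq_empty_or_nonempty A with hAe | hAne
      · rw [hAe, Real.sSup_empty]
        exact Real.sSup_nonneg (fun b hb => hb.1)
      · exact csSup_le_csSup hbdd hAne hAB
    · refine Real.sSup_le (fun b hb => ?_) (Real.sSup_nonneg (fun a haa => haa.1))
      rcases eq_or_lt_of_le hb.1 with h | h
      · rw [← h]
        exact Real.sSup_nonneg (fun a haa => haa.1)
      · by_contra hcon
        push_neg at hcon
        set a : ℝ := max ((sSup A + b) / 2) (b / 2) with ha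
        have ha0 : 0 < a := lt_max_of_lt_right (by linarith)
        have hab : a < b := max_lt (by linarith) (by linarith)
        have haA : a ∈ A := hBA b hb a ha0 hab
        have : a ≤ sSup A := le_csSup hAbdd haA
        have : (sSup A + b) / 2 ≤ sSup A := le_trans (le_max_left _ _) this
        linarith
  · have hAubd : ¬ BddAbove A := by
      intro hAbd
      apply hbdd
      rcases hAbd with ⟨M, hM⟩
      refine ⟨max M 0 + 1, fun b hb => ?_⟩
      by_contra hcon
      push_neg at hcon
      have : max M 0 + 1 ∈ A :=
        hBA b hb _ (by positivity) hcon
      have := hM this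
      have : M ≤ max M 0 := le_max_left _ _
      linarith
    rw [Real.sSup_of_not_bddAbove hAubd, Real.sSup_of_not_bddAbove hbdd]
end

section
/- If a non-increasing positive null sequence (x_n) satisfies c₁ n^{-α} (ln(n+1))^{β₁} ≤ x_n ≤ c₂ n^{-α} (ln(n+1))^{β₂} for all sufficiently large n, where α, c₁, c₂ > 0 and β₁ ≤ β₂ are real, then its lower decay rate sup{a ≥ 0 : Σ x_n^{1/a} < ∞} and its upper decay rate inf{a ≥ 0 : inf_n x_n n^a > 0} both equal α. -/
open Filter

-- H1: log(n+2)^t eventually ≤ (n+1)^ε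
lemma H1 (t ε : ℝ) (hε : 0 < ε) :
    ∀ᶠ n : ℕ in atTop, Real.log ((n:ℝ)+2) ^ t ≤ ((n:ℝ)+1) ^ ε := by
  have h := (isLittleO_log_rpow_rpow_atTop t (half_pos hε)).bound one_pos
  have h2 : ∀ᶠ n : ℕ in atTop, ‖Real.log ((n:ℝ)+2) ^ t‖ ≤ 1 * ‖((n:ℝ)+2) ^ (ε/2)‖ :=
    (tendsto_atTop_add_const_right atTop (2:ℝ) tendsto_natCast_atTop_atTop).eventually h
  filter_upwards [h2, eventually_ge_atTop 1] with n hn hn1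
  have h1 : (1:ℝ) ≤ (n:ℝ) + 1 := by have : (0:ℝ) ≤ (n:ℝ) := Nat.cast_nonneg n; linarith
  calc Real.log ((n:ℝ)+2) ^ t ≤ |Real.log ((n:ℝ)+2) ^ t| := le_abs_self _
    _ ≤ 1 * |((n:ℝ)+2) ^ (ε/2)| := by simpa [Real.norm_eq_abs] using hn
    _ = ((n:ℝ)+2) ^ (ε/2) := by
        rw [one_mul, abs_of_nonneg (Real.rpow_nonneg (by positivity) _)]
    _ ≤ (((n:ℝ)+1)^(2:ℕ)) ^ (ε/2) := by
        apply Real.rpow_le_rpow (by positivity) _ (le_of_lt (half_pos hε))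
        have : (1:ℝ) ≤ (n:ℝ) := by exact_mod_cast hn1
        nlinarith
    _ = ((n:ℝ)+1) ^ ε := by
        rw [← Real.rpow_natCast ((n:ℝ)+1) 2, ← Real.rpow_mul (by positivity)]
        congr 1
        push_cast
        ring

-- H2: (n+1)^(-ε) eventually ≤ log(n+2)^t
lemma H2 (t ε : ℝ) (hε : 0 < ε) :
    ∀ᶠ n : ℕ in atTop, ((n:ℝ)+1) ^ (-ε) ≤ Real.log ((n:ℝ)+2) ^ t := by
  filter_upwards [H1 (-t) ε hε] with n hn
  have hl : 0 < Real.log ((n:ℝ)+2) := Real.log_pos (by have : (0:ℝ) ≤ (n:ℝ) := Nat.cast_nonneg n; linarith)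
  have h1 : (0:ℝ) < ((n:ℝ)+1) ^ ε := Real.rpow_pos_of_pos (by positivity) _
  rw [Real.rpow_neg (by positivity)]
  rw [Real.rpow_neg hl.le] at hn
  have ht : 0 < Real.log ((n:ℝ)+2) ^ t := Real.rpow_pos_of_pos hl _
  calc (((n:ℝ)+1) ^ ε)⁻¹ ≤ ((Real.log ((n:ℝ)+2) ^ t)⁻¹)⁻¹ := by
        apply inv_anti₀ (by positivity) hn
    _ = Real.log ((n:ℝ)+2) ^ t := inv_inv _

lemma Hsummable_shift (s : ℝ) (hs : 1 < s) :
    Summable (fun n : ℕ => ((n:ℝ)+1) ^ (-s)) := by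
  have : Summable (fun n : ℕ => ((n:ℝ)) ^ (-s)) :=
    Real.summable_nat_rpow.mpr (by linarith)
  have := (summable_nat_add_iff 1).mpr this
  simpa [Nat.cast_add] using this

lemma Hnotsummable_shift (s : ℝ) (hs : s < 1) :
    ¬ Summable (fun n : ℕ => ((n:ℝ)+1) ^ (-s)) := by
  intro h
  have : Summable (fun n : ℕ => ((n:ℝ)) ^ (-s)) := by
    rw [← summable_nat_add_iff 1]
    simpa [Nat.cast_add] using h
  have := Real.summable_nat_rpow.mp this
  linarith

-- H3: summable when s > 1
lemma H3 (s t : ℝ) (hs : 1 < s) :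
    Summable (fun n : ℕ => ((n:ℝ)+1) ^ (-s) * Real.log ((n:ℝ)+2) ^ t) := by
  set ε := (s-1)/2 with hε
  have hεpos : 0 < ε := by rw [hε]; linarith
  apply summable_of_isBigO_nat (Hsummable_shift (s-ε) (by rw [hε]; linarith))
  apply Asymptotics.IsBigO.of_bound 1
  filter_upwards [H1 t ε hεpos] with n hn
  have hb : (0:ℝ) < (n:ℝ)+1 := by positivity
  have hl : 0 < Real.log ((n:ℝ)+2) := Real.log_pos (by have : (0:ℝ) ≤ (n:ℝ) := Nat.cast_nonneg n; linarith)
  rw [Real.norm_eq_abs, Real.norm_eq_abs, one_mul,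
    abs_of_nonneg (by positivity), abs_of_nonneg (Real.rpow_nonneg hb.le _)]
  calc ((n:ℝ)+1) ^ (-s) * Real.log ((n:ℝ)+2) ^ t
      ≤ ((n:ℝ)+1) ^ (-s) * ((n:ℝ)+1) ^ ε := by
        apply mul_le_mul_of_nonneg_left hn (Real.rpow_nonneg hb.le _)
    _ = ((n:ℝ)+1) ^ (-(s-ε)) := by rw [← Real.rpow_add hb]; ring_nf

-- H4: not summable when s < 1
lemma H4 (s t : ℝ) (hs : s < 1)
    (h : Summable (fun n : ℕ => ((n:ℝ)+1) ^ (-s) * Real.log ((n:ℝ)+2) ^ t)) : False := by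
  set ε := (1-s)/2 with hε
  have hεpos : 0 < ε := by rw [hε]; linarith
  apply Hnotsummable_shift (s+ε) (by rw [hε]; linarith)
  apply summable_of_isBigO_nat h
  apply Asymptotics.IsBigO.of_bound 1
  filter_upwards [H2 t ε hεpos] with n hn
  have hb : (0:ℝ) < (n:ℝ)+1 := by positivity
  have hl : 0 < Real.log ((n:ℝ)+2) := Real.log_pos (by have : (0:ℝ) ≤ (n:ℝ) := Nat.cast_nonneg n; linarith)
  rw [Real.norm_eq_abs, Real.norm_eq_abs, one_mul,
    abs_of_nonneg (Real.rpow_nonneg hb.le _), abs_of_nonneg (by positivity)]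
  calc ((n:ℝ)+1) ^ (-(s+ε)) = ((n:ℝ)+1) ^ (-s) * ((n:ℝ)+1) ^ (-ε) := by
        rw [← Real.rpow_add hb]; ring_nf
    _ ≤ ((n:ℝ)+1) ^ (-s) * Real.log ((n:ℝ)+2) ^ t :=
        mul_le_mul_of_nonneg_left hn (Real.rpow_nonneg hb.le _)


/-- If a non-increasing positive null sequence satisfies
`c₁ n^{-α} ln(n+1)^{β₁} ≤ x_n ≤ c₂ n^{-α} ln(n+1)^{β₂}` for large `n`, then both the
lower decay rate `sup{a ≥ 0 : Σ x_n^{1/a} < ∞}` and the upper decay rate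
`inf{a ≥ 0 : inf_n x_n n^a > 0}` equal `α`. -/
theorem stmt4 (x : ℕ → ℝ) (hpos : ∀ n, 1 ≤ n → 0 < x n)
    (hmono : ∀ m n, 1 ≤ m → m ≤ n → x n ≤ x m)
    (hlim : Tendsto x atTop (nhds 0))
    (α c₁ c₂ β₁ β₂ : ℝ) (hα : 0 < α) (hc₁ : 0 < c₁) (hc₂ : 0 < c₂) (hβ : β₁ ≤ β₂)
    (N : ℕ)
    (hbd : ∀ n : ℕ, N ≤ n → 1 ≤ n →
      c₁ * (n : ℝ) ^ (-α) * Real.log ((n : ℝ) + 1) ^ β₁ ≤ x n ∧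
      x n ≤ c₂ * (n : ℝ) ^ (-α) * Real.log ((n : ℝ) + 1) ^ β₂) :
    sSup {a : ℝ | 0 ≤ a ∧ Summable (fun n : ℕ => x (n + 1) ^ (1 / a))} = α ∧
    sInf {a : ℝ | 0 ≤ a ∧ 0 < ⨅ n : ℕ, x (n + 1) * ((n : ℝ) + 1) ^ a} = α := by
  have key : ∀ᶠ n : ℕ in atTop,
      c₁ * ((n:ℝ)+1) ^ (-α) * Real.log ((n:ℝ)+2) ^ β₁ ≤ x (n+1) ∧
      x (n+1) ≤ c₂ * ((n:ℝ)+1) ^ (-α) * Real.log ((n:ℝ)+2) ^ β₂ := by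
    filter_upwards [eventually_ge_atTop N] with n hn
    have h := hbd (n+1) (by omega) (by omega)
    push_cast at h
    have e : ((n:ℝ) + 1 + 1) = (n:ℝ) + 2 := by ring
    rw [e] at h
    exact h
  -- Part 1 : the sup of summability exponents
  set S := {a : ℝ | 0 ≤ a ∧ Summable (fun n : ℕ => x (n + 1) ^ (1 / a))} with hSdef
  have hmemS : ∀ a, 0 < a → a < α → a ∈ S := by
    intro a ha haα
    refine ⟨ha.le, ?_⟩
    apply summable_of_isBigO_nat
      ((H3 (α/a) (β₂/a) ((one_lt_div ha).mpr haα)).mul_left (c₂ ^ (1/a)))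
    apply Asymptotics.IsBigO.of_bound 1
    filter_upwards [key] with n hn
    have hx : 0 < x (n+1) := hpos (n+1) (by omega)
    have hb : (0:ℝ) < (n:ℝ)+1 := by positivity
    have hl : 0 < Real.log ((n:ℝ)+2) := Real.log_pos (by have : (0:ℝ) ≤ (n:ℝ) := Nat.cast_nonneg n; linarith)
    rw [Real.norm_eq_abs, Real.norm_eq_abs, one_mul,
      abs_of_nonneg (Real.rpow_nonneg hx.le _), abs_of_nonneg (by positivity)]
    have e1 : -α * (1/a) = -(α/a) := by ring
    have e2 : β₂ * (1/a) = β₂/a := by ring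
    calc x (n+1) ^ (1/a)
        ≤ (c₂ * ((n:ℝ)+1) ^ (-α) * Real.log ((n:ℝ)+2) ^ β₂) ^ (1/a) :=
          Real.rpow_le_rpow hx.le hn.2 (by positivity)
      _ = c₂ ^ (1/a) * (((n:ℝ)+1) ^ (-(α/a)) * Real.log ((n:ℝ)+2) ^ (β₂/a)) := by
          rw [Real.mul_rpow (by positivity) (Real.rpow_nonneg hl.le _),
            Real.mul_rpow (by positivity) (Real.rpow_nonneg hb.le _),
            ← Real.rpow_mul hb.le, ← Real.rpow_mul hl.le, e1, e2, mul_assoc]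
  have hub : ∀ a ∈ S, a ≤ α := by
    rintro a ⟨ha0, hsum⟩
    by_contra hlt
    push_neg at hlt
    have ha : 0 < a := hα.trans hlt
    have hcp : (0:ℝ) < c₁ ^ (1/a) := Real.rpow_pos_of_pos hc₁ _
    apply H4 (α/a) (β₁/a) ((div_lt_one ha).mpr hlt)
    apply summable_of_isBigO_nat (hsum.mul_left (c₁ ^ (1/a))⁻¹)
    apply Asymptotics.IsBigO.of_bound 1
    filter_upwards [key] with n hn
    have hx : 0 < x (n+1) := hpos (n+1) (by omega)
    have hb : (0:ℝ) < (n:ℝ)+1 := by positivity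
    have hl : 0 < Real.log ((n:ℝ)+2) := Real.log_pos (by have : (0:ℝ) ≤ (n:ℝ) := Nat.cast_nonneg n; linarith)
    rw [Real.norm_eq_abs, Real.norm_eq_abs, one_mul,
      abs_of_nonneg (by positivity), abs_of_nonneg (by positivity)]
    have e1 : -α * (1/a) = -(α/a) := by ring
    have e2 : β₁ * (1/a) = β₁/a := by ring
    have hmain : c₁ ^ (1/a) * (((n:ℝ)+1) ^ (-(α/a)) * Real.log ((n:ℝ)+2) ^ (β₁/a))
        ≤ x (n+1) ^ (1/a) := by
      calc c₁ ^ (1/a) * (((n:ℝ)+1) ^ (-(α/a)) * Real.log ((n:ℝ)+2) ^ (β₁/a))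
          = (c₁ * ((n:ℝ)+1) ^ (-α) * Real.log ((n:ℝ)+2) ^ β₁) ^ (1/a) := by
            rw [Real.mul_rpow (by positivity) (Real.rpow_nonneg hl.le _),
              Real.mul_rpow (by positivity) (Real.rpow_nonneg hb.le _),
              ← Real.rpow_mul hb.le, ← Real.rpow_mul hl.le, e1, e2, mul_assoc]
        _ ≤ x (n+1) ^ (1/a) := Real.rpow_le_rpow (by positivity) hn.1 (by positivity)
    calc ((n:ℝ)+1) ^ (-(α/a)) * Real.log ((n:ℝ)+2) ^ (β₁/a)
        ≤ x (n+1) ^ (1/a) / c₁ ^ (1/a) := (le_div_iff₀' hcp).mpr hmain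
      _ = (c₁ ^ (1/a))⁻¹ * x (n+1) ^ (1/a) := div_eq_inv_mul _ _
  have hSne : S.Nonempty := ⟨α/2, hmemS _ (half_pos hα) (half_lt_self hα)⟩
  have hSbdd : BddAbove S := ⟨α, fun a ha => hub a ha⟩
  have h1 : sSup S = α := by
    apply le_antisymm (csSup_le hSne hub)
    apply le_of_forall_lt
    intro c hc
    set d := (max c 0 + α)/2 with hd
    have hmax : max c 0 < α := max_lt hc hα
    have hd0 : 0 < d := by
      have : (0:ℝ) ≤ max c 0 := le_max_right _ _
      rw [hd]; linarith
    have hdα : d < α := by rw [hd]; linarith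
    have hcd : c < d := by
      have : c ≤ max c 0 := le_max_left _ _
      rw [hd]; linarith
    exact lt_of_lt_of_le hcd (le_csSup hSbdd (hmemS d hd0 hdα))
  -- Part 2 : the inf of decay exponents
  set T := {a : ℝ | 0 ≤ a ∧ 0 < ⨅ n : ℕ, x (n + 1) * ((n : ℝ) + 1) ^ a} with hTdef
  have hbb : ∀ a : ℝ, BddBelow (Set.range fun n : ℕ => x (n+1) * ((n:ℝ)+1) ^ a) := by
    intro a
    refine ⟨0, ?_⟩
    rintro y ⟨n, rfl⟩
    have := hpos (n+1) (by omega)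
    positivity
  have hTlb : ∀ a ∈ T, α ≤ a := by
    rintro a ⟨ha0, hinf⟩
    by_contra h
    push_neg at h
    have hε : 0 < (α - a)/2 := by linarith
    have htend : Tendsto (fun n : ℕ => x (n+1) * ((n:ℝ)+1) ^ a) atTop (nhds 0) := by
      have hg : Tendsto (fun n : ℕ => c₂ * ((n:ℝ)+1) ^ (-((α-a)/2))) atTop (nhds 0) := by
        have := (tendsto_rpow_neg_atTop hε).comp
          (tendsto_atTop_add_const_right atTop (1:ℝ) tendsto_natCast_atTop_atTop)
        simpa using this.const_mul c₂
      apply squeeze_zero' ?_ ?_ hg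
      · filter_upwards with n
        have := hpos (n+1) (by omega)
        positivity
      · filter_upwards [key, H1 β₂ ((α-a)/2) hε] with n hn hn2
        have hb : (0:ℝ) < (n:ℝ)+1 := by positivity
        have hl : 0 < Real.log ((n:ℝ)+2) := Real.log_pos (by have : (0:ℝ) ≤ (n:ℝ) := Nat.cast_nonneg n; linarith)
        calc x (n+1) * ((n:ℝ)+1) ^ a
            ≤ c₂ * ((n:ℝ)+1) ^ (-α) * Real.log ((n:ℝ)+2) ^ β₂ * ((n:ℝ)+1) ^ a := by
              apply mul_le_mul_of_nonneg_right hn.2 (Real.rpow_nonneg hb.le _)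
          _ = c₂ * (((n:ℝ)+1) ^ (a-α) * Real.log ((n:ℝ)+2) ^ β₂) := by
              rw [show a-α = -α+a by ring, Real.rpow_add hb]; ring
          _ ≤ c₂ * (((n:ℝ)+1) ^ (a-α) * ((n:ℝ)+1) ^ ((α-a)/2)) := by
              apply mul_le_mul_of_nonneg_left
                (mul_le_mul_of_nonneg_left hn2 (Real.rpow_nonneg hb.le _)) hc₂.le
          _ = c₂ * ((n:ℝ)+1) ^ (-((α-a)/2)) := by
              rw [← Real.rpow_add hb, show a-α+(α-a)/2 = -((α-a)/2) by ring]
    obtain ⟨n, hn⟩ := (htend.eventually_lt_const hinf).exists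
    exact absurd (ciInf_le (hbb a) n) (not_le.mpr hn)
  have hmemT : ∀ a, α < a → a ∈ T := by
    intro a ha
    have hε : 0 < (a - α)/2 := by linarith
    refine ⟨(hα.trans ha).le, ?_⟩
    have hev : ∀ᶠ n : ℕ in atTop, c₁ ≤ x (n+1) * ((n:ℝ)+1) ^ a := by
      filter_upwards [key, H2 β₁ ((a-α)/2) hε] with n hn hn2
      have hb : (0:ℝ) < (n:ℝ)+1 := by positivity
      have hl : 0 < Real.log ((n:ℝ)+2) := Real.log_pos (by have : (0:ℝ) ≤ (n:ℝ) := Nat.cast_nonneg n; linarith)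
      have h1le : (1:ℝ) ≤ ((n:ℝ)+1) ^ ((a-α)/2) := by
        calc (1:ℝ) = ((n:ℝ)+1) ^ (0:ℝ) := (Real.rpow_zero _).symm
          _ ≤ ((n:ℝ)+1) ^ ((a-α)/2) := Real.rpow_le_rpow_of_exponent_le
              (by have : (0:ℝ) ≤ (n:ℝ) := Nat.cast_nonneg n; linarith) hε.le
      calc c₁ = c₁ * 1 := by ring
        _ ≤ c₁ * ((n:ℝ)+1) ^ ((a-α)/2) := by
            apply mul_le_mul_of_nonneg_left h1le hc₁.le
        _ = c₁ * (((n:ℝ)+1) ^ (a-α) * ((n:ℝ)+1) ^ (-((a-α)/2))) := by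
            rw [← Real.rpow_add hb, show a-α+-((a-α)/2) = (a-α)/2 by ring]
        _ ≤ c₁ * (((n:ℝ)+1) ^ (a-α) * Real.log ((n:ℝ)+2) ^ β₁) := by
            apply mul_le_mul_of_nonneg_left
              (mul_le_mul_of_nonneg_left hn2 (Real.rpow_nonneg hb.le _)) hc₁.le
        _ = c₁ * ((n:ℝ)+1) ^ (-α) * Real.log ((n:ℝ)+2) ^ β₁ * ((n:ℝ)+1) ^ a := by
            rw [show a-α = -α+a by ring, Real.rpow_add hb]; ring
        _ ≤ x (n+1) * ((n:ℝ)+1) ^ a :=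
            mul_le_mul_of_nonneg_right hn.1 (Real.rpow_nonneg hb.le _)
    rw [eventually_atTop] at hev
    obtain ⟨M, hM⟩ := hev
    have hne : (Finset.range (M+1)).Nonempty := ⟨0, by simp⟩
    set m := (Finset.range (M+1)).inf' hne (fun n => x (n+1) * ((n:ℝ)+1) ^ a) with hm
    have hm0 : 0 < m := by
      obtain ⟨n, hnmem, hneq⟩ := Finset.exists_mem_eq_inf' hne
        (fun n => x (n+1) * ((n:ℝ)+1) ^ a)
      rw [hm, hneq]
      have := hpos (n+1) (by omega)
      positivity
    have hlow : ∀ n : ℕ, min c₁ m ≤ x (n+1) * ((n:ℝ)+1) ^ a := by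
      intro n
      rcases le_or_gt M n with hMn | hMn
      · exact le_trans (min_le_left _ _) (hM n hMn)
      · exact le_trans (min_le_right _ _)
          (Finset.inf'_le _ (Finset.mem_range.mpr (by omega)))
    calc (0:ℝ) < min c₁ m := lt_min hc₁ hm0
      _ ≤ ⨅ n : ℕ, x (n+1) * ((n:ℝ)+1) ^ a := le_ciInf hlow
  have h2 : sInf T = α := by
    apply le_antisymm
    · apply le_of_forall_pos_le_add
      intro ε hεp
      exact le_trans (csInf_le ⟨α, fun b hb => hTlb b hb⟩
        (hmemT (α + ε) (by linarith))) le_rfl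
    · exact le_csInf ⟨α + 1, hmemT _ (by linarith)⟩ hTlb
  exact ⟨h1, h2⟩
end

section
/- Define recursively n₁ = 0 and n_{k+1} = 2^{n_k} + 1, and let y_n = 2^{-n_k} for n ∈ [n_k, n_{k+1}). Then the lower decay rate sup{α ≥ 0 : Σ y_n^{1/α} < ∞} of the sequence (y_n) equals 1. -/
/-!
On the `k`-th block `[n_k, n_{k+1})`, of length `2^{n_k} + 1 - n_k`, the power `y^b` is the
constant `2^{-b n_k}`, so the block contributes roughly `2^{(1-b) n_k}` to `Σ y^b`. For `b = 1`
every block contributes at least `1/2`, so `Σ y` diverges, and so does `Σ y^b` for `b ≤ 1`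
because `y ≤ 1`. For `b > 1` the block contributions are dominated by a geometric series.
Hence `Σ y^{1/α}` converges exactly for `0 < α < 1`, whose supremum is `1`.
-/

open Filter

/-- The sequence `n₁ = 0`, `n_{k+1} = 2^{n_k} + 1` (here `nk 0 = 0`). -/
def nk : ℕ → ℕ
  | 0 => 0
  | k + 1 => 2 ^ nk k + 1

open Finset

theorem exists_le_lt_apply_succ {φ : ℕ → ℕ} (hφ : StrictMono φ) (h0 : φ 0 = 0) (n : ℕ) :
    ∃ k, φ k ≤ n ∧ n < φ (k + 1) := by
  induction n with
  | zero => exact ⟨0, h0.le, by simpa [h0] using hφ Nat.zero_lt_one⟩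
  | succ n ih =>
    obtain ⟨k, hk, hn⟩ := ih
    rcases (Nat.add_one_le_of_lt hn).lt_or_eq with h | h
    · exact ⟨k, by omega, h⟩
    · exact ⟨k + 1, h.ge, by rw [h]; exact hφ (Nat.lt_succ_self _)⟩

theorem sum_range_apply_eq_sum_sum_Ico {M : Type*} [AddCommMonoid M] (f : ℕ → M) {φ : ℕ → ℕ}
    (hφ : Monotone φ) (h0 : φ 0 = 0) (K : ℕ) :
    ∑ i ∈ range (φ K), f i = ∑ k ∈ range K, ∑ i ∈ Ico (φ k) (φ (k + 1)), f i := by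
  induction K with
  | zero => simp [h0]
  | succ K ih =>
    rw [sum_range_succ, ← ih, range_eq_Ico, range_eq_Ico,
      sum_Ico_consecutive f (Nat.zero_le _) (hφ K.le_succ)]

theorem summable_iff_summable_sum_Ico {f : ℕ → ℝ} (hf : ∀ n, 0 ≤ f n) {φ : ℕ → ℕ}
    (hφ : StrictMono φ) (h0 : φ 0 = 0) :
    Summable f ↔ Summable fun k ↦ ∑ i ∈ Ico (φ k) (φ (k + 1)), f i := by
  have hpartial := sum_range_apply_eq_sum_sum_Ico f hφ.monotone h0
  have hblock_nonneg : ∀ k, 0 ≤ ∑ i ∈ Ico (φ k) (φ (k + 1)), f i :=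
    fun k ↦ sum_nonneg fun i _ ↦ hf i
  constructor
  · intro hsum
    refine summable_of_sum_range_le (c := ∑' i, f i) hblock_nonneg fun K ↦ ?_
    rw [← hpartial]
    exact hsum.sum_le_tsum _ fun i _ ↦ hf i
  · intro hsum
    refine summable_of_sum_range_le (c := ∑' k, ∑ i ∈ Ico (φ k) (φ (k + 1)), f i) hf fun n ↦ ?_
    calc ∑ i ∈ range n, f i ≤ ∑ i ∈ range (φ n), f i :=
          sum_le_sum_of_subset_of_nonneg (range_subset_range.2 hφ.le_apply) fun i _ _ ↦ hf i
      _ ≤ _ := hpartial n ▸ hsum.sum_le_tsum _ fun k _ ↦ hblock_nonneg k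

theorem two_mul_le_two_pow_add_two (m : ℕ) : 2 * m ≤ 2 ^ m + 2 := by
  cases m with
  | zero => simp
  | succ m =>
    have := Nat.lt_two_pow_self (n := m)
    rw [pow_succ]
    omega

theorem nk_lt_succ (k : ℕ) : nk k < nk (k + 1) :=
  Nat.lt_succ_of_lt Nat.lt_two_pow_self

theorem nk_strictMono : StrictMono nk := strictMono_nat_of_lt_succ nk_lt_succ

theorem cast_nk_succ_sub (k : ℕ) :
    ((nk (k + 1) - nk k : ℕ) : ℝ) = (2 : ℝ) ^ nk k + 1 - nk k := by
  rw [Nat.cast_sub (nk_lt_succ k).le, nk]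
  push_cast
  ring

def IsBlockwiseInvTwoPow (y : ℕ → ℝ) : Prop :=
  ∀ k n : ℕ, nk k ≤ n → n < nk (k + 1) → y n = (2 : ℝ) ^ (-(nk k : ℝ))

namespace IsBlockwiseInvTwoPow

variable {y : ℕ → ℝ}

theorem pos (hy : IsBlockwiseInvTwoPow y) (n : ℕ) : 0 < y n := by
  obtain ⟨k, hk, hn⟩ := exists_le_lt_apply_succ nk_strictMono rfl n
  rw [hy k n hk hn]
  positivity

theorem le_one (hy : IsBlockwiseInvTwoPow y) (n : ℕ) : y n ≤ 1 := by
  obtain ⟨k, hk, hn⟩ := exists_le_lt_apply_succ nk_strictMono rfl n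
  rw [hy k n hk hn]
  exact Real.rpow_le_one_of_one_le_of_nonpos one_le_two (neg_nonpos.2 (Nat.cast_nonneg _))

theorem sum_Ico_rpow (hy : IsBlockwiseInvTwoPow y) (b : ℝ) (k : ℕ) :
    ∑ i ∈ Ico (nk k) (nk (k + 1)), y i ^ b
      = ((2 : ℝ) ^ nk k + 1 - nk k) * ((2 : ℝ) ^ (-b)) ^ nk k := by
  have hval : ∀ i ∈ Ico (nk k) (nk (k + 1)), y i ^ b = ((2 : ℝ) ^ (-b)) ^ nk k := by
    intro i hi
    rw [hy k i (mem_Ico.1 hi).1 (mem_Ico.1 hi).2, ← Real.rpow_mul zero_le_two,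
      ← Real.rpow_natCast, ← Real.rpow_mul zero_le_two, mul_comm]
    ring_nf
  rw [sum_congr rfl hval, sum_const, Nat.card_Ico, nsmul_eq_mul, cast_nk_succ_sub]

theorem not_summable (hy : IsBlockwiseInvTwoPow y) : ¬ Summable y := by
  have hblock : ∀ k, (1 / 2 : ℝ) ≤ ∑ i ∈ Ico (nk k) (nk (k + 1)), y i := by
    intro k
    have hsum := hy.sum_Ico_rpow 1 k
    simp only [Real.rpow_one] at hsum
    rw [hsum, Real.rpow_neg_one, inv_pow, ← div_eq_mul_inv, le_div_iff₀ (by positivity)]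
    have : (2 * nk k : ℝ) ≤ 2 ^ nk k + 2 := by exact_mod_cast two_mul_le_two_pow_add_two (nk k)
    linarith
  intro hsum
  rw [summable_iff_summable_sum_Ico (fun n ↦ (hy.pos n).le) nk_strictMono rfl] at hsum
  have := ge_of_tendsto' hsum.tendsto_atTop_zero hblock
  norm_num at this

theorem summable_rpow (hy : IsBlockwiseInvTwoPow y) {b : ℝ} (hb : 1 < b) :
    Summable fun n ↦ y n ^ b := by
  have hr : 2 * (2 : ℝ) ^ (-b) = (2 : ℝ) ^ (1 - b) := by
    rw [Real.rpow_sub two_pos, Real.rpow_one, Real.rpow_neg zero_le_two, div_eq_mul_inv]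
  set r : ℝ := (2 : ℝ) ^ (1 - b)
  have hr0 : 0 ≤ r := by positivity
  have hr1 : r < 1 := Real.rpow_lt_one_of_one_lt_of_neg one_lt_two (by linarith)
  have hblock : ∀ k, ∑ i ∈ Ico (nk k) (nk (k + 1)), y i ^ b ≤ 2 * r ^ k := by
    intro k
    have hlen : (2 : ℝ) ^ nk k + 1 - nk k ≤ 2 * 2 ^ nk k := by
      have : (1 : ℝ) ≤ 2 ^ nk k := one_le_pow₀ one_le_two
      have : (0 : ℝ) ≤ nk k := Nat.cast_nonneg _
      linarith
    calc ∑ i ∈ Ico (nk k) (nk (k + 1)), y i ^ b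
        = ((2 : ℝ) ^ nk k + 1 - nk k) * ((2 : ℝ) ^ (-b)) ^ nk k := hy.sum_Ico_rpow b k
      _ ≤ 2 * 2 ^ nk k * ((2 : ℝ) ^ (-b)) ^ nk k := by gcongr
      _ = 2 * r ^ nk k := by rw [mul_assoc, ← mul_pow, hr]
      _ ≤ 2 * r ^ k := by
          gcongr 2 * ?_
          exact pow_le_pow_of_le_one hr0 hr1.le nk_strictMono.le_apply
  have hnonneg : ∀ n, 0 ≤ y n ^ b := fun n ↦ Real.rpow_nonneg (hy.pos n).le _
  rw [summable_iff_summable_sum_Ico hnonneg nk_strictMono rfl]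
  exact .of_nonneg_of_le (fun k ↦ sum_nonneg fun i _ ↦ hnonneg i) hblock
    ((summable_geometric_of_lt_one hr0 hr1).mul_left 2)

theorem summable_rpow_iff (hy : IsBlockwiseInvTwoPow y) (b : ℝ) :
    (Summable fun n ↦ y n ^ b) ↔ 1 < b := by
  refine ⟨fun hsum ↦ ?_, hy.summable_rpow⟩
  by_contra! hb
  refine hy.not_summable (hsum.of_nonneg_of_le (fun n ↦ (hy.pos n).le) fun n ↦ ?_)
  simpa using Real.rpow_le_rpow_of_exponent_ge (hy.pos n) (hy.le_one n) hb

end IsBlockwiseInvTwoPow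

/-- For the sequence `y_n = 2^{-n_k}` for `n ∈ [n_k, n_{k+1})`, the lower decay
rate `sup{α ≥ 0 : Σ_{n≥1} y_n^{1/α} < ∞}` equals `1`. -/
theorem stmt5 (y : ℕ → ℝ)
    (hy : ∀ k n : ℕ, nk k ≤ n → n < nk (k + 1) → y n = (2 : ℝ) ^ (-(nk k : ℝ))) :
    sSup {a : ℝ | 0 ≤ a ∧ Summable (fun n : ℕ => y (n + 1) ^ (1 / a))} = 1 := by
  have hset : {a : ℝ | 0 ≤ a ∧ Summable (fun n : ℕ => y (n + 1) ^ (1 / a))} = Set.Ioo 0 1 := by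
    ext a
    change 0 ≤ a ∧ Summable (fun n ↦ y (n + 1) ^ (1 / a)) ↔ 0 < a ∧ a < 1
    rw [summable_nat_add_iff 1 (f := fun n ↦ y n ^ (1 / a)),
      IsBlockwiseInvTwoPow.summable_rpow_iff hy, one_div, one_lt_inv_iff₀]
    exact ⟨fun h ↦ h.2, fun h ↦ ⟨h.1.le, h⟩⟩
  rw [hset, csSup_Ioo one_pos]
end

section
/- Let (γ_j) be a nonincreasing sequence with 1 ≥ γ₁ ≥ γ₂ ≥ ... ≥ 0 whose lower decay rate d^low_γ exceeds some τ > 0, i.e., Σ_j γ_j^{1/τ} < ∞. For finite subsets u of ℕ set γ_u := Π_{j∈u} γ_j. Then for every constant C > 0 there are constants 0 < c₁ ≤ c₂ such that for all k with γ_k > 0: c₁ γ_k^{1/τ} ≤ Σ_{u : k ∈ u ⊆ [k]} γ_u^{1/τ} C^{|u|} ≤ c₂ γ_k^{1/τ}, where the sum is over all finite u ⊆ {1,...,k} containing k. -/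
open Filter

/-- For product weights `γ_u = Π_{j∈u} γ_j` built from a nonincreasing sequence
`1 ≥ γ₁ ≥ γ₂ ≥ ... ≥ 0` with `Σ_j γ_j^{1/τ} < ∞`: for every `C > 0` there are
constants `0 < c₁ ≤ c₂` with
`c₁ γ_k^{1/τ} ≤ Σ_{u : k ∈ u ⊆ [k]} γ_u^{1/τ} C^{|u|} ≤ c₂ γ_k^{1/τ}`
for all `k ≥ 1` with `γ_k > 0`. -/
theorem stmt8 (γ : ℕ → ℝ) (hnonneg : ∀ j, 0 ≤ γ j) (h1 : γ 1 ≤ 1)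
    (hmono : ∀ m n, 1 ≤ m → m ≤ n → γ n ≤ γ m)
    (τ : ℝ) (hτ : 0 < τ) (hsum : Summable (fun j : ℕ => γ (j + 1) ^ (1 / τ)))
    (C : ℝ) (hC : 0 < C) :
    ∃ c₁ c₂ : ℝ, 0 < c₁ ∧ c₁ ≤ c₂ ∧ ∀ k : ℕ, 1 ≤ k → 0 < γ k →
      c₁ * γ k ^ (1 / τ) ≤
        (∑ u ∈ (Finset.Icc 1 k).powerset.filter (fun u => k ∈ u),
          (∏ j ∈ u, γ j) ^ (1 / τ) * C ^ u.card) ∧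
      (∑ u ∈ (Finset.Icc 1 k).powerset.filter (fun u => k ∈ u),
          (∏ j ∈ u, γ j) ^ (1 / τ) * C ^ u.card) ≤ c₂ * γ k ^ (1 / τ) := by
  set S := ∑' j : ℕ, γ (j + 1) ^ (1 / τ) with hSdef
  have hSnn : 0 ≤ S := tsum_nonneg (fun j => Real.rpow_nonneg (hnonneg _) _)
  refine ⟨C, C * Real.exp (C * S), hC, ?_, ?_⟩
  · nlinarith [Real.one_le_exp (mul_nonneg hC.le hSnn)]
  intro k hk hγk
  have hknot : k ∉ Finset.Icc 1 (k - 1) := by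
    simp only [Finset.mem_Icc]; omega
  have hins : Finset.Icc 1 k = insert k (Finset.Icc 1 (k-1)) := by
    ext x; simp only [Finset.mem_Icc, Finset.mem_insert]; omega
  have himg : ((Finset.Icc 1 k).powerset.filter (fun u => k ∈ u))
      = (Finset.Icc 1 (k-1)).powerset.image (insert k) := by
    rw [hins]; ext u
    simp only [Finset.mem_filter, Finset.mem_powerset, Finset.mem_image]
    constructor
    · rintro ⟨hsub, hmem⟩
      refine ⟨u.erase k, ?_, Finset.insert_erase hmem⟩
      intro x hx
      obtain ⟨hxk, hxu⟩ := Finset.mem_erase.mp hx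
      rcases Finset.mem_insert.mp (hsub hxu) with h | h
      · exact absurd h hxk
      · exact h
    · rintro ⟨v, hv, rfl⟩
      exact ⟨Finset.insert_subset_insert _ hv, Finset.mem_insert_self _ _⟩
  have hsum_eq : (∑ u ∈ (Finset.Icc 1 k).powerset.filter (fun u => k ∈ u),
      (∏ j ∈ u, γ j) ^ (1 / τ) * C ^ u.card)
      = C * γ k ^ (1/τ) * ∏ j ∈ Finset.Icc 1 (k-1), (1 + C * γ j ^ (1/τ)) := by
    rw [himg, Finset.sum_image (by
      intro v₁ h₁ v₂ h₂ h
      have n₁ : k ∉ v₁ := fun hm => hknot (Finset.mem_powerset.mp h₁ hm)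
      have n₂ : k ∉ v₂ := fun hm => hknot (Finset.mem_powerset.mp h₂ hm)
      have := congrArg (Finset.erase · k) h
      simpa [Finset.erase_insert n₁, Finset.erase_insert n₂] using this)]
    have step : ∀ v ∈ (Finset.Icc 1 (k-1)).powerset,
        (∏ j ∈ insert k v, γ j) ^ (1 / τ) * C ^ (insert k v).card
        = C * γ k ^ (1/τ) * ∏ j ∈ v, (C * γ j ^ (1/τ)) := by
      intro v hv
      have hkv : k ∉ v := fun hm => hknot (Finset.mem_powerset.mp hv hm)
      rw [Finset.prod_insert hkv, Finset.card_insert_of_notMem hkv,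
        Real.mul_rpow (hnonneg k) (Finset.prod_nonneg (fun j _ => hnonneg j)),
        ← Real.finset_prod_rpow v γ (fun j _ => hnonneg j), Finset.prod_mul_distrib,
        Finset.prod_const, pow_succ]
      ring
    rw [Finset.sum_congr rfl step, ← Finset.mul_sum]
    congr 1
    have := Finset.prod_add (fun j => C * γ j ^ (1/τ)) (fun _ => (1:ℝ)) (Finset.Icc 1 (k-1))
    simp only [Finset.prod_const_one, mul_one] at this
    rw [← this]
    exact Finset.prod_congr rfl (fun j _ => by ring)
  rw [hsum_eq]
  have hfac_nn : ∀ j ∈ Finset.Icc 1 (k-1), (1:ℝ) ≤ 1 + C * γ j ^ (1/τ) := by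
    intro j _
    nlinarith [Real.rpow_nonneg (hnonneg j) (1/τ), mul_nonneg hC.le (Real.rpow_nonneg (hnonneg j) (1/τ))]
  have hγk_nn : 0 ≤ γ k ^ (1/τ) := Real.rpow_nonneg (hnonneg k) _
  constructor
  · have h1le : (1:ℝ) ≤ ∏ j ∈ Finset.Icc 1 (k-1), (1 + C * γ j ^ (1/τ)) :=
      by
      have := Finset.prod_le_prod (s := Finset.Icc 1 (k-1)) (f := fun _ => (1:ℝ))
        (g := fun j => 1 + C * γ j ^ (1/τ)) (fun j _ => zero_le_one) (fun j hj => hfac_nn j hj)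
      simpa using this
    nlinarith [mul_nonneg hC.le hγk_nn]
  · -- product ≤ exp (C * S)
    have hsum_le : ∑ j ∈ Finset.Icc 1 (k-1), C * γ j ^ (1/τ) ≤ C * S := by
      have : ∑ j ∈ Finset.Icc 1 (k-1), γ j ^ (1/τ)
          = ∑ i ∈ Finset.range (k-1), γ (i+1) ^ (1/τ) := by
        rw [← Finset.Ico_add_one_right_eq_Icc, Finset.sum_Ico_eq_sum_range]
        have h2 : k - 1 + 1 - 1 = k - 1 := by omega
        rw [h2]
        exact Finset.sum_congr rfl (fun i _ => by rw [add_comm])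
      rw [← Finset.mul_sum, this]
      exact mul_le_mul_of_nonneg_left
        (Summable.sum_le_tsum _ (fun i _ => Real.rpow_nonneg (hnonneg _) _) hsum) hC.le
    have hprod_le : ∏ j ∈ Finset.Icc 1 (k-1), (1 + C * γ j ^ (1/τ)) ≤ Real.exp (C * S) := by
      calc ∏ j ∈ Finset.Icc 1 (k-1), (1 + C * γ j ^ (1/τ))
          ≤ ∏ j ∈ Finset.Icc 1 (k-1), Real.exp (C * γ j ^ (1/τ)) := by
            apply Finset.prod_le_prod (fun j hj => by linarith [hfac_nn j hj])
            intro j _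
            have := Real.add_one_le_exp (C * γ j ^ (1/τ))
            linarith
        _ = Real.exp (∑ j ∈ Finset.Icc 1 (k-1), C * γ j ^ (1/τ)) := (Real.exp_sum _ _).symm
        _ ≤ Real.exp (C * S) := Real.exp_le_exp.mpr hsum_le
    calc C * γ k ^ (1/τ) * ∏ j ∈ Finset.Icc 1 (k-1), (1 + C * γ j ^ (1/τ))
        ≤ C * γ k ^ (1/τ) * Real.exp (C * S) :=
          mul_le_mul_of_nonneg_left hprod_le (mul_nonneg hC.le hγk_nn)
      _ = C * Real.exp (C * S) * γ k ^ (1/τ) := by ring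
end

section
/- Let (γ_j) and (λ_j) be nonincreasing positive sequences with γ_j ≤ 1, and suppose q > 0 satisfies C_λ := Σ_{j≥1} λ_j^{1/q} < ∞ and C_γ := Σ_{j≥1} γ_j^{1/q} < ∞. For a finite set u ⊆ ℕ and j ∈ ℕ^u write γ_u = Π_{i∈u} γ_i and λ_{u,j} = Π_{i∈u} λ_{j_i}. For ε > 0 and k ∈ ℕ define M(ε,k) := {(u,j) : k ∈ u ⊆ [k], j ∈ ℕ^u, γ_u λ_{u,j} > ε²}. Then there is a constant c > 0 independent of ε and k such that |M(ε,k)| ≤ c · ε^{-2/q} · Σ_{u : k ∈ u ⊆ [k]} γ_u^{1/q} C_λ^{|u|−1}. -/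
open Filter

/-- The set `M(ε,k)` of pairs `(u,j)` with `k ∈ u ⊆ [k]`, `j ∈ ℕ^u` (encoded as a
function `ℕ → ℕ` taking values `≥ 1` on `u` and `0` off `u`), and
`γ_u λ_{u,j} > ε²`. -/
def Mset (γ l : ℕ → ℝ) (ε : ℝ) (k : ℕ) : Set (Finset ℕ × (ℕ → ℕ)) :=
  {p | k ∈ p.1 ∧ p.1 ⊆ Finset.Icc 1 k ∧ (∀ i ∈ p.1, 1 ≤ p.2 i) ∧
    (∀ i ∉ p.1, p.2 i = 0) ∧
    ε ^ 2 < (∏ i ∈ p.1, γ i) * ∏ i ∈ p.1, l (p.2 i)}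

lemma aux_sum_le (u : Finset ℕ) (w : ℕ → ℝ) (hw : ∀ n, 0 ≤ w n)
    (hsum : Summable (fun n : ℕ => w (n + 1)))
    (F : Finset (ℕ → ℕ))
    (hF : ∀ j ∈ F, (∀ i ∈ u, 1 ≤ j i) ∧ (∀ i ∉ u, j i = 0)) :
    ∑ j ∈ F, ∏ i ∈ u, w (j i) ≤ ∏ _i ∈ u, (∑' n : ℕ, w (n + 1)) := by
  classical
  set N : ℕ := F.sup (fun j => u.sup j) with hN
  have hjN : ∀ j ∈ F, ∀ i ∈ u, j i ≤ N :=
    fun j hj i hi => le_trans (Finset.le_sup hi) (Finset.le_sup (f := fun j => u.sup j) hj)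
  set T := u.pi (fun _ => Finset.Icc 1 N) with hT
  set e : (ℕ → ℕ) → (∀ i ∈ u, ℕ) := fun j => fun i _ => j i with he
  have hinj : ∀ j ∈ F, ∀ j' ∈ F, e j = e j' → j = j' := by
    intro j hj j' hj' h
    funext i
    by_cases hi : i ∈ u
    · exact congrFun (congrFun h i) hi
    · rw [(hF j hj).2 i hi, (hF j' hj').2 i hi]
  have himg : F.image e ⊆ T := by
    intro p hp
    rw [Finset.mem_image] at hp
    obtain ⟨j, hj, rfl⟩ := hp
    rw [Finset.mem_pi]
    intro i hi
    rw [Finset.mem_Icc]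
    exact ⟨(hF j hj).1 i hi, hjN j hj i hi⟩
  have step1 : ∑ j ∈ F, ∏ i ∈ u, w (j i)
      = ∑ p ∈ F.image e, ∏ x ∈ u.attach, w (p x.1 x.2) := by
    rw [Finset.sum_image hinj]
    exact Finset.sum_congr rfl (fun j hj =>
      (Finset.prod_attach u (fun i => w (j i))).symm)
  have step2 : ∑ p ∈ F.image e, ∏ x ∈ u.attach, w (p x.1 x.2)
      ≤ ∑ p ∈ T, ∏ x ∈ u.attach, w (p x.1 x.2) :=
    Finset.sum_le_sum_of_subset_of_nonneg himg
      (fun p _ _ => Finset.prod_nonneg (fun x _ => hw _))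
  have step3 : ∑ p ∈ T, ∏ x ∈ u.attach, w (p x.1 x.2)
      = ∏ i ∈ u, ∑ n ∈ Finset.Icc 1 N, w n := by
    rw [Finset.prod_sum]
  have step4 : ∀ i ∈ u, ∑ n ∈ Finset.Icc 1 N, w n ≤ ∑' n : ℕ, w (n + 1) := by
    intro i _
    have h : ∑ n ∈ Finset.Icc 1 N, w n = ∑ m ∈ Finset.range N, w (m + 1) := by
      rw [← Finset.Ico_add_one_right_eq_Icc, Finset.sum_Ico_eq_sum_range]
      simp [add_comm]
    rw [h]
    exact Summable.sum_le_tsum _ (fun m _ => hw _) hsum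
  calc ∑ j ∈ F, ∏ i ∈ u, w (j i)
      ≤ ∏ i ∈ u, ∑ n ∈ Finset.Icc 1 N, w n := by rw [step1, ← step3]; exact step2
    _ ≤ ∏ _i ∈ u, (∑' n : ℕ, w (n + 1)) :=
        Finset.prod_le_prod (fun i _ => Finset.sum_nonneg (fun n _ => hw n)) step4

lemma aux_card (u : Finset ℕ) (w : ℕ → ℝ) (hw : ∀ n, 0 ≤ w n)
    (hsum : Summable (fun n : ℕ => w (n + 1))) (D : ℝ) (hD : 0 ≤ D)
    (S : Set (ℕ → ℕ))
    (hS : ∀ j ∈ S, (∀ i ∈ u, 1 ≤ j i) ∧ (∀ i ∉ u, j i = 0) ∧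
      1 ≤ D * ∏ i ∈ u, w (j i)) :
    S.Finite ∧ (S.ncard : ℝ) ≤ D * ∏ _i ∈ u, (∑' n : ℕ, w (n + 1)) := by
  classical
  set B : ℝ := D * ∏ _i ∈ u, (∑' n : ℕ, w (n + 1)) with hB
  have key : ∀ F : Finset (ℕ → ℕ), ↑F ⊆ S → (F.card : ℝ) ≤ B := by
    intro F hFS
    have h1 : (F.card : ℝ) = ∑ j ∈ F, (1 : ℝ) := by simp
    have h2 : ∑ j ∈ F, (1 : ℝ) ≤ ∑ j ∈ F, D * ∏ i ∈ u, w (j i) :=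
      Finset.sum_le_sum (fun j hj => (hS j (hFS hj)).2.2)
    have h3 : ∑ j ∈ F, D * ∏ i ∈ u, w (j i) = D * ∑ j ∈ F, ∏ i ∈ u, w (j i) :=
      (Finset.mul_sum _ _ _).symm
    have h4 : D * ∑ j ∈ F, ∏ i ∈ u, w (j i) ≤ B :=
      mul_le_mul_of_nonneg_left
        (aux_sum_le u w hw hsum F
          (fun j hj => ⟨(hS j (hFS hj)).1, (hS j (hFS hj)).2.1⟩)) hD
    linarith
  have hfin : S.Finite := by
    by_contra hinf
    replace hinf : S.Infinite := hinf
    obtain ⟨t, hts, htfin, htcard⟩ := hinf.exists_subset_ncard_eq (⌈B⌉₊ + 1)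
    have h1 : (t.ncard : ℝ) ≤ B := by
      rw [Set.ncard_eq_toFinset_card t htfin]
      exact key htfin.toFinset (by rw [Set.Finite.coe_toFinset]; exact hts)
    rw [htcard] at h1
    have h2 := Nat.le_ceil B
    push_cast at h1
    linarith
  refine ⟨hfin, ?_⟩
  rw [Set.ncard_eq_toFinset_card S hfin]
  exact key hfin.toFinset (by rw [Set.Finite.coe_toFinset])

/-- Under summability of `Σ λ_j^{1/q}` and `Σ γ_j^{1/q}` and the bound
`λ_j ≤ c₂ j^{-q}`, there is a constant `c > 0` with
`|M(ε,k)| ≤ c ε^{-2/q} Σ_{u : k ∈ u ⊆ [k]} γ_u^{1/q} C_λ^{|u|-1}`. -/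
theorem stmt14 (γ l : ℕ → ℝ)
    (hγpos : ∀ j, 1 ≤ j → 0 < γ j) (hγ1 : ∀ j, 1 ≤ j → γ j ≤ 1)
    (hγmono : ∀ m n, 1 ≤ m → m ≤ n → γ n ≤ γ m)
    (hlpos : ∀ j, 1 ≤ j → 0 < l j)
    (hlmono : ∀ m n, 1 ≤ m → m ≤ n → l n ≤ l m)
    (q : ℝ) (hq : 0 < q)
    (hsuml : Summable (fun j : ℕ => l (j + 1) ^ (1 / q)))
    (hsumγ : Summable (fun j : ℕ => γ (j + 1) ^ (1 / q)))
    (c₂ : ℝ) (hc₂ : 0 < c₂) (hub : ∀ j : ℕ, 1 ≤ j → l j ≤ c₂ * (j : ℝ) ^ (-q)) :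
    ∃ c : ℝ, 0 < c ∧ ∀ ε : ℝ, 0 < ε → ∀ k : ℕ, 1 ≤ k →
      ((Mset γ l ε k).ncard : ℝ) ≤
        c * ε ^ (-(2 / q)) *
          ∑ u ∈ (Finset.Icc 1 k).powerset.filter (fun u => k ∈ u),
            (∏ j ∈ u, γ j) ^ (1 / q) *
              (∑' j : ℕ, l (j + 1) ^ (1 / q)) ^ (u.card - 1) := by
  classical
  set C : ℝ := ∑' j : ℕ, l (j + 1) ^ (1 / q) with hC
  have hlnn : ∀ n : ℕ, 0 ≤ l (n + 1) ^ (1 / q) :=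
    fun n => Real.rpow_nonneg (hlpos (n + 1) (by omega)).le _
  have hCpos : 0 < C :=
    Summable.tsum_pos hsuml hlnn 0 (Real.rpow_pos_of_pos (hlpos 1 le_rfl) _)
  refine ⟨C, hCpos, ?_⟩
  intro ε hε k hk
  set w : ℕ → ℝ := fun n => l (max n 1) ^ (1 / q) with hwdef
  have hwnn : ∀ n, 0 ≤ w n :=
    fun n => Real.rpow_nonneg (hlpos (max n 1) (le_max_right _ _)).le _
  have hwshift : (fun n : ℕ => w (n + 1)) = fun n : ℕ => l (n + 1) ^ (1 / q) := by
    funext n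
    simp only [hwdef, Nat.max_eq_left (by omega : 1 ≤ n + 1)]
  have hwsum : Summable (fun n : ℕ => w (n + 1)) := by rw [hwshift]; exact hsuml
  have hwtsum : (∑' n : ℕ, w (n + 1)) = C := by rw [hwshift]
  set T := (Finset.Icc 1 k).powerset.filter (fun u => k ∈ u) with hT
  set S : Finset ℕ → Set (ℕ → ℕ) := fun u =>
    {j | (∀ i ∈ u, 1 ≤ j i) ∧ (∀ i ∉ u, j i = 0) ∧
      ε ^ 2 < (∏ i ∈ u, γ i) * ∏ i ∈ u, l (j i)} with hS
  set D : Finset ℕ → ℝ := fun u => ε ^ (-(2 / q)) * (∏ i ∈ u, γ i) ^ (1 / q) with hD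
  have hεq : (ε ^ 2 : ℝ) ^ (1 / q) = ε ^ (2 / q) := by
    rw [← Real.rpow_natCast ε 2, ← Real.rpow_mul hε.le]
    norm_num [div_eq_mul_inv]
  have hγu : ∀ u ∈ T, 0 < ∏ i ∈ u, γ i := by
    intro u hu
    rw [hT, Finset.mem_filter, Finset.mem_powerset] at hu
    exact Finset.prod_pos (fun i hi => hγpos i (Finset.mem_Icc.mp (hu.1 hi)).1)
  have hDnn : ∀ u ∈ T, 0 ≤ D u := by
    intro u hu
    exact mul_nonneg (Real.rpow_pos_of_pos hε _).le
      (Real.rpow_nonneg (hγu u hu).le _)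
  -- the key pointwise estimate
  have hkey : ∀ u ∈ T, ∀ j ∈ S u, (∀ i ∈ u, 1 ≤ j i) ∧ (∀ i ∉ u, j i = 0) ∧
      1 ≤ D u * ∏ i ∈ u, w (j i) := by
    intro u hu j hj
    obtain ⟨hj1, hj2, hj3⟩ := hj
    refine ⟨hj1, hj2, ?_⟩
    have hl0 : ∀ i ∈ u, 0 < l (j i) := fun i hi => hlpos _ (hj1 i hi)
    have hprod : 0 < ∏ i ∈ u, l (j i) := Finset.prod_pos hl0
    have h5 : (ε ^ 2 : ℝ) ^ (1 / q) <
        ((∏ i ∈ u, γ i) * ∏ i ∈ u, l (j i)) ^ (1 / q) :=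
      Real.rpow_lt_rpow (by positivity) hj3 (by positivity)
    have hwj : ∀ i ∈ u, l (j i) ^ (1 / q) = w (j i) := by
      intro i hi
      simp only [hwdef, Nat.max_eq_left (hj1 i hi)]
    have hBv : ((∏ i ∈ u, γ i) * ∏ i ∈ u, l (j i)) ^ (1 / q)
        = (∏ i ∈ u, γ i) ^ (1 / q) * ∏ i ∈ u, w (j i) := by
      rw [Real.mul_rpow (hγu u hu).le hprod.le,
        ← Real.finset_prod_rpow u _ (fun i hi => (hl0 i hi).le)]
      exact congrArg _ (Finset.prod_congr rfl hwj)
    rw [hεq, hBv] at h5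
    have h6 : (0:ℝ) ≤ ε ^ (-(2 / q)) := (Real.rpow_pos_of_pos hε _).le
    calc (1:ℝ) = ε ^ (-(2 / q)) * ε ^ (2 / q) := by
          rw [← Real.rpow_add hε]; norm_num
      _ ≤ ε ^ (-(2 / q)) * ((∏ i ∈ u, γ i) ^ (1 / q) * ∏ i ∈ u, w (j i)) :=
          mul_le_mul_of_nonneg_left h5.le h6
      _ = D u * ∏ i ∈ u, w (j i) := by rw [hD]; ring
  have hcard : ∀ u ∈ T, (S u).Finite ∧
      ((S u).ncard : ℝ) ≤ D u * C ^ u.card := by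
    intro u hu
    obtain ⟨hfin, hle⟩ := aux_card u w hwnn hwsum (D u) (hDnn u hu) (S u) (hkey u hu)
    refine ⟨hfin, hle.trans_eq ?_⟩
    rw [Finset.prod_const, hwtsum]
  -- assemble the global bound
  set G : Finset ℕ → Finset (ℕ → ℕ) := fun u =>
    if h : (S u).Finite then h.toFinset else ∅ with hG
  set BigF : Finset (Finset ℕ × (ℕ → ℕ)) :=
    T.biUnion (fun u => (G u).image (Prod.mk u)) with hBigF
  have hsubset : Mset γ l ε k ⊆ ↑BigF := by
    rintro ⟨u, j⟩ hp
    obtain ⟨hk1, hk2, hk3, hk4, hk5⟩ := hp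
    have hu : u ∈ T := by
      rw [hT, Finset.mem_filter, Finset.mem_powerset]; exact ⟨hk2, hk1⟩
    have hjS : j ∈ S u := ⟨hk3, hk4, hk5⟩
    have hjG : j ∈ G u := by
      rw [hG]; simp only [dif_pos (hcard u hu).1, Set.Finite.mem_toFinset]
      exact hjS
    simp only [hBigF, Finset.coe_biUnion, Set.mem_iUnion, Finset.mem_coe]
    exact ⟨u, hu, Finset.mem_image_of_mem _ hjG⟩
  have hmcard : ((Mset γ l ε k).ncard : ℝ) ≤ ∑ u ∈ T, ((S u).ncard : ℝ) := by
    have h1 : (Mset γ l ε k).ncard ≤ BigF.card := by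
      rw [← Set.ncard_coe_finset BigF]
      exact Set.ncard_le_ncard hsubset (BigF.finite_toSet)
    have h2 : BigF.card ≤ ∑ u ∈ T, (G u).card := by
      refine (Finset.card_biUnion_le).trans (Finset.sum_le_sum ?_)
      intro u _
      exact le_of_eq (Finset.card_image_of_injective _
        (fun a b h => by simpa using congrArg Prod.snd (h : (u,a) = (u,b))))
    have h3 : ∀ u ∈ T, (G u).card = (S u).ncard := by
      intro u hu
      rw [hG]
      simp only [dif_pos (hcard u hu).1]
      exact (Set.ncard_eq_toFinset_card _ (hcard u hu).1).symm
    calc ((Mset γ l ε k).ncard : ℝ) ≤ (BigF.card : ℝ) := by exact_mod_cast h1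
      _ ≤ (∑ u ∈ T, (G u).card : ℕ) := by exact_mod_cast h2
      _ = ∑ u ∈ T, ((S u).ncard : ℝ) := by
          push_cast
          exact Finset.sum_congr rfl (fun u hu => by exact_mod_cast h3 u hu)
  refine hmcard.trans ?_
  have hfinal : ∑ u ∈ T, ((S u).ncard : ℝ) ≤ ∑ u ∈ T, D u * C ^ u.card :=
    Finset.sum_le_sum (fun u hu => (hcard u hu).2)
  refine hfinal.trans (le_of_eq ?_)
  rw [Finset.mul_sum]
  refine Finset.sum_congr rfl ?_
  intro u hu
  have hupos : 1 ≤ u.card := by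
    rw [hT, Finset.mem_filter] at hu
    exact Finset.card_pos.mpr ⟨k, hu.2⟩
  have hcc : u.card = (u.card - 1) + 1 := (Nat.succ_pred_eq_of_pos hupos).symm
  conv_lhs => rw [hcc]
  rw [hD, pow_succ]
  ring
end

section
/- Let H be a Hilbert space that is the orthogonal direct sum of closed subspaces (H_u)_{u∈U} (U countable), and let S : H → G be a bounded linear map into a Hilbert space G such that S(H_u) ⟂ S(H_v) in G for u ≠ v. If A : H → G is a bounded linear map with A(H_u) ⊆ closure of S(H_u) for every u, then for every f ∈ H with orthogonal decomposition f = Σ_u f_u, one has ‖S f − A f‖²_G = Σ_u ‖S f_u − A f_u‖²_G. -/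
open scoped RealInnerProductSpace

/-- If a family `g` is pairwise orthogonal and sums to `x`, then
`‖x‖² = ∑' u, ‖g u‖²` (Pythagoras for infinite sums). -/
lemma hasSum_norm_sq_of_pairwise_orth {G : Type*}
    [NormedAddCommGroup G] [InnerProductSpace ℝ G]
    {U : Type*} (g : U → G) (x : G)
    (horth : ∀ u v, u ≠ v → ⟪g u, g v⟫ = 0)
    (hsum : HasSum g x) :
    ‖x‖ ^ 2 = ∑' u : U, ‖g u‖ ^ 2 := by
  have h1 : ∀ u, HasSum (fun v => ⟪g u, g v⟫) ⟪g u, x⟫ := fun u =>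
    (innerSL ℝ (g u)).hasSum hsum
  classical
  have h2 : ∀ u, ⟪g u, x⟫ = ‖g u‖ ^ 2 := by
    intro u
    have h0 : HasSum (fun v => if v = u then ‖g u‖ ^ 2 else 0) ⟪g u, x⟫ := by
      refine (h1 u).congr_fun fun v => ?_
      by_cases hv : v = u
      · subst hv; simp [real_inner_self_eq_norm_sq]
      · simp [hv, horth u v (Ne.symm hv)]
    have h3 : HasSum (fun v => if v = u then ‖g u‖ ^ 2 else 0) (‖g u‖ ^ 2) :=
      hasSum_ite_eq u _
    exact h0.unique h3
  have h4 : HasSum (fun u => ⟪g u, x⟫) ⟪x, x⟫ := by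
    have := (innerSL ℝ x).hasSum hsum
    refine this.congr_fun fun u => ?_
    rw [innerSL_apply_apply]; exact real_inner_comm x (g u)
  rw [← real_inner_self_eq_norm_sq]
  have h5 : HasSum (fun u => ‖g u‖ ^ 2) ⟪x, x⟫ := h4.congr_fun fun u => (h2 u).symm
  exact h5.tsum_eq.symm

/-- Error decomposition over an orthogonal Hilbert sum: if `H = ⊕_u H_u`
(the subspaces `V u` are closed and pairwise orthogonal), `S, A : H → G` are
bounded linear maps such that the images `S(H_u)` are pairwise orthogonal and
`A(H_u) ⊆ closure(S(H_u))`, then for `f = Σ_u f_u` with `f_u ∈ H_u` one has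
`‖S f − A f‖² = Σ_u ‖S f_u − A f_u‖²`. -/
theorem stmt18 {H G : Type*}
    [NormedAddCommGroup H] [InnerProductSpace ℝ H] [CompleteSpace H]
    [NormedAddCommGroup G] [InnerProductSpace ℝ G] [CompleteSpace G]
    {U : Type*} [Countable U] (V : U → Submodule ℝ H)
    (hclosed : ∀ u, IsClosed (V u : Set H))
    (horth : ∀ u v, u ≠ v → ∀ x ∈ V u, ∀ y ∈ V v, ⟪x, y⟫ = 0)
    (hdense : (⨆ u, V u).topologicalClosure = ⊤)
    (S A : H →L[ℝ] G)
    (hSorth : ∀ u v, u ≠ v → ∀ x ∈ V u, ∀ y ∈ V v, ⟪S x, S y⟫ = 0)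
    (hA : ∀ u, ∀ x ∈ V u,
      A x ∈ (Submodule.map (S : H →ₗ[ℝ] G) (V u)).topologicalClosure)
    (f : H) (fc : U → H) (hfc : ∀ u, fc u ∈ V u) (hsum : HasSum fc f) :
    ‖S f - A f‖ ^ 2 = ∑' u : U, ‖S (fc u) - A (fc u)‖ ^ 2 := by
  set K : U → Submodule ℝ G := fun u => Submodule.map (S : H →ₗ[ℝ] G) (V u) with hK
  set W : U → Submodule ℝ G := fun u => (K u).topologicalClosure with hW
  set g : U → G := fun u => S (fc u) - A (fc u) with hg
  have hgW : ∀ u, g u ∈ W u := fun u =>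
    sub_mem ((K u).le_topologicalClosure ⟨fc u, hfc u, rfl⟩) (hA u (fc u) (hfc u))
  -- pairwise orthogonality of the g's
  have hgorth : ∀ u v, u ≠ v → ⟪g u, g v⟫ = 0 := by
    intro u v huv
    -- first: everything in W u is orthogonal to everything in K v
    have step1 : ∀ b ∈ K v, ⟪g u, b⟫ = 0 := by
      intro b hb
      obtain ⟨y, hy, rfl⟩ := hb
      have hKle : K u ≤ (ℝ ∙ ((S : H →ₗ[ℝ] G) y))ᗮ := by
        rintro a ⟨x, hx, rfl⟩
        rw [Submodule.mem_orthogonal_singleton_iff_inner_left]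
        exact hSorth u v huv x hx y hy
      have hgu := (K u).topologicalClosure_minimal hKle
        (Submodule.isClosed_orthogonal _) (hgW u)
      rwa [Submodule.mem_orthogonal_singleton_iff_inner_left] at hgu
    -- then extend to W v by closedness
    have hKle2 : K v ≤ (ℝ ∙ g u)ᗮ := by
      intro b hb
      rw [Submodule.mem_orthogonal_singleton_iff_inner_right]
      exact step1 b hb
    have hgv := (K v).topologicalClosure_minimal hKle2
      (Submodule.isClosed_orthogonal _) (hgW v)
    rwa [Submodule.mem_orthogonal_singleton_iff_inner_right] at hgv
  have hsum' : HasSum g (S f - A f) := by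
    have hs : HasSum (fun u => S (fc u)) (S f) := S.hasSum hsum
    have ha : HasSum (fun u => A (fc u)) (A f) := A.hasSum hsum
    exact hs.sub ha
  exact hasSum_norm_sq_of_pairwise_orth g _ hgorth hsum'
end
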